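/- arXiv:2502.11346 — 2 statements merged into one kernel-verified Lean document; each statement's English description precedes it below -/
import Mathlib

section
/- Let M and M₀ be positive integers with M₀ dividing M, set d = M/M₀, and fix an integer offset s with 0 ≤ s < d. Let F̄ be the M₀×M partial DFT matrix with entries F̄_{i,k} = exp(−2πi·(s + i·d)·k / M) for i = 0, …, M₀−1 and k = 0, …, M−1. Then for every vector h ∈ ℂ^M whose entries satisfy h_k = 0 for all k ≥ K, where K is an integer with K ≤ M₀, one has (1/M₀)·‖F̄ h‖² = ‖h‖², where ‖·‖ is the Euclidean norm. -/
/-!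
With `ω = exp(2πi/M)`, the entries of `F̄` are powers of `ω⁻¹`, and the Gram entry
`(F̄ᴴ F̄)_{k k'}` is `ω^{s(k-k')}` times a geometric sum of the primitive `M₀`-th root `ω^d`
over a full period. It vanishes unless `M₀ ∣ k - k'`, which for `k, k' < M₀` forces `k = k'`.
So the columns of `F̄` indexed by the support of `h` are orthogonal of squared norm `M₀`,
and `‖F̄ h‖² = M₀ ‖h‖²`.
-/

open Finset Complex

namespace IsPrimitiveRoot
variable {K : Type*} [Field K]

theorem geom_sum_zpow_eq_ite {ζ : K} {n : ℕ} (hζ : IsPrimitiveRoot ζ n) (m : ℤ) :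
    ∑ i ∈ range n, (ζ ^ m) ^ i = if (n : ℤ) ∣ m then (n : K) else 0 := by
  split_ifs with hdvd
  · simp [(hζ.zpow_eq_one_iff_dvd m).2 hdvd]
  · have hne : ζ ^ m ≠ 1 := mt (hζ.zpow_eq_one_iff_dvd m).1 hdvd
    rw [geom_sum_eq hne, ← zpow_natCast, ← zpow_mul, mul_comm, zpow_mul, hζ.zpow_eq_one,
      one_zpow, sub_self, zero_div]

theorem sum_zpow_sampled_eq_ite {ω : K} {M₀ d : ℕ} (hω : IsPrimitiveRoot ω (M₀ * d))
    (hd : d ≠ 0) (s : ℕ) {k k' : ℕ} (hk : k < M₀) (hk' : k' < M₀) :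
    ∑ i ∈ range M₀, ω ^ (((s + i * d : ℕ) : ℤ) * ((k : ℤ) - k')) =
      if k = k' then (M₀ : K) else 0 := by
  have hM : 0 < M₀ * d := Nat.mul_pos (by omega) (Nat.pos_of_ne_zero hd)
  have hωd : IsPrimitiveRoot (ω ^ d) M₀ := hω.pow hM (mul_comm _ _)
  have hterm : ∀ i : ℕ, ω ^ (((s + i * d : ℕ) : ℤ) * ((k : ℤ) - k')) =
      ω ^ ((s : ℤ) * ((k : ℤ) - k')) * ((ω ^ d) ^ ((k : ℤ) - k')) ^ i := by
    intro i
    rw [← zpow_natCast, ← zpow_mul, ← zpow_natCast, ← zpow_mul, ← zpow_add₀ (hω.ne_zero hM.ne')]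
    congr 1
    push_cast; ring
  have hdvd : (M₀ : ℤ) ∣ (k : ℤ) - k' ↔ k = k' :=
    ⟨fun h ↦ by have := Int.eq_zero_of_abs_lt_dvd h (by rw [abs_lt]; omega); omega,
      fun h ↦ by simp [h]⟩
  simp only [hterm, ← mul_sum, hωd.geom_sum_zpow_eq_ite, hdvd]
  split_ifs with h <;> simp [h]

end IsPrimitiveRoot

open Matrix

section
variable {𝕜 m n : Type*} [RCLike 𝕜] [Fintype m] [Fintype n] [DecidableEq n]

theorem Matrix.sum_norm_sq_mulVec_of_conjTranspose_mul_self_apply (A : Matrix m n 𝕜)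
    (v : n → 𝕜) (c : ℝ)
    (hA : ∀ k k', v k ≠ 0 → v k' ≠ 0 → (Aᴴ * A) k k' = if k = k' then (c : 𝕜) else 0) :
    ∑ i, ‖(A *ᵥ v) i‖ ^ 2 = c * ∑ k, ‖v k‖ ^ 2 := by
  have hG : ∀ k k', star (v k) * ((Aᴴ * A) k k' * v k') =
      star (v k) * ((if k = k' then (c : 𝕜) else 0) * v k') := by
    intro k k'
    by_cases hk : v k = 0
    · simp [hk]
    by_cases hk' : v k' = 0
    · simp [hk']
    rw [hA k k' hk hk']
  apply RCLike.ofReal_injective (K := 𝕜)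
  push_cast
  simp_rw [← RCLike.conj_mul, mul_sum, ← RCLike.star_def]
  calc ∑ i, star ((A *ᵥ v) i) * (A *ᵥ v) i
      = star v ⬝ᵥ ((Aᴴ * A) *ᵥ v) := by
        rw [← mulVec_mulVec, dotProduct_mulVec, ← star_mulVec]; rfl
    _ = ∑ k, ∑ k', star (v k) * ((Aᴴ * A) k k' * v k') := by
        simp only [dotProduct, mulVec, mul_sum, Pi.star_apply]
    _ = ∑ k, ↑c * (star (v k) * v k) := by
        simp only [hG, ite_mul, zero_mul, mul_ite, mul_zero, sum_ite_eq, mem_univ, if_true]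
        exact sum_congr rfl fun k _ => mul_left_comm _ _ _

end

noncomputable def sampledDFT (M M₀ d s : ℕ) : Matrix (Fin M₀) (Fin M) ℂ :=
  of fun i k ↦ exp (-2 * Real.pi * I * ((s : ℂ) + ((i : ℕ) : ℂ) * (d : ℂ)) * ((k : ℕ) : ℂ) / M)

theorem Complex.star_exp_mul_exp_eq_zpow (M a k k' : ℕ) :
    star (exp (-2 * Real.pi * I * a * k / M)) * exp (-2 * Real.pi * I * a * k' / M) =
      exp (2 * Real.pi * I / M) ^ ((a : ℤ) * ((k : ℤ) - k')) := by
  rw [Complex.star_def, ← exp_conj, ← exp_add, ← exp_int_mul]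
  congr 1
  simp only [map_div₀, map_mul, map_neg, map_ofNat, conj_ofReal, conj_I, map_natCast]
  push_cast
  ring

theorem conjTranspose_sampledDFT_mul_self_apply {M M₀ d : ℕ} (hM : M = M₀ * d) (s : ℕ)
    {k k' : Fin M} (hk : (k : ℕ) < M₀) (hk' : (k' : ℕ) < M₀) :
    ((sampledDFT M M₀ d s)ᴴ * sampledDFT M M₀ d s) k k' = if k = k' then (M₀ : ℂ) else 0 := by
  have hM0 : M ≠ 0 := (Fin.pos k).ne'
  have hζ : IsPrimitiveRoot (exp (2 * Real.pi * I / M)) (M₀ * d) :=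
    hM ▸ isPrimitiveRoot_exp M hM0
  have hd : d ≠ 0 := fun hd0 ↦ hM0 (by rw [hM, hd0, mul_zero])
  have hentry : ∀ i : Fin M₀, star (sampledDFT M M₀ d s i k) * sampledDFT M M₀ d s i k' =
      exp (2 * Real.pi * I / M) ^ (((s + i * d : ℕ) : ℤ) * ((k : ℤ) - (k' : ℕ))) := by
    intro i
    rw [← star_exp_mul_exp_eq_zpow]
    simp only [sampledDFT, of_apply]
    push_cast
    ring_nf
  have hsum := hζ.sum_zpow_sampled_eq_ite hd s hk hk'
  rw [← Fin.sum_univ_eq_sum_range] at hsum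
  simpa only [mul_apply, conjTranspose_apply, hentry, Fin.val_inj] using hsum

theorem stmt_5_general (M M₀ K : ℕ) (hM₀ : 0 < M₀) (hdvd : M₀ ∣ M) (s : ℕ)
    (hK : K ≤ M₀)
    (F : Matrix (Fin M₀) (Fin M) ℂ)
    (hF : ∀ (i : Fin M₀) (k : Fin M),
      F i k = Complex.exp (-2 * Real.pi * Complex.I *
        ((s : ℂ) + ((i : ℕ) : ℂ) * ((M / M₀ : ℕ) : ℂ)) * ((k : ℕ) : ℂ) / (M : ℂ)))
    (h : Fin M → ℂ) (hh : ∀ k : Fin M, K ≤ (k : ℕ) → h k = 0) :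
    (1 / M₀ : ℝ) * ∑ i, ‖(F *ᵥ h) i‖ ^ 2 = ∑ k, ‖h k‖ ^ 2 := by
  obtain ⟨d, hM⟩ := hdvd
  have hd : M / M₀ = d := by rw [hM, Nat.mul_div_cancel_left _ hM₀]
  obtain rfl : F = sampledDFT M M₀ d s := by ext i k; rw [hF, hd]; rfl
  have hsupp : ∀ k, h k ≠ 0 → (k : ℕ) < M₀ := fun k hk ↦
    (not_le.1 (mt (hh k) hk)).trans_le hK
  have hGram : ∀ k k', h k ≠ 0 → h k' ≠ 0 →
      ((sampledDFT M M₀ d s)ᴴ * sampledDFT M M₀ d s) k k' =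
        if k = k' then ((M₀ : ℝ) : ℂ) else 0 := fun k k' hk hk' ↦ by
    simpa using conjTranspose_sampledDFT_mul_self_apply hM s (hsupp k hk) (hsupp k' hk')
  rw [sum_norm_sq_mulVec_of_conjTranspose_mul_self_apply _ _ (M₀ : ℝ) hGram, one_div,
    inv_mul_cancel_left₀ (by positivity)]

/-- Core of Lemma 0: for reference signals uniformly inserted on `M₀` of the
`M` subcarriers (rows `s, s+d, …, s+(M₀-1)d` of the `M × M` DFT matrix, where
`d = M / M₀`), the average power `(1/M₀)‖F̄ h‖²` over the sampled subcarriers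
equals the full power `‖h‖²` whenever `h` is supported on its first `K ≤ M₀`
coordinates. -/
theorem stmt_5 (M M₀ K : ℕ) (hM₀ : 0 < M₀) (hdvd : M₀ ∣ M) (s : ℕ)
    (hs : s < M / M₀) (hK : K ≤ M₀)
    (F : Matrix (Fin M₀) (Fin M) ℂ)
    (hF : ∀ (i : Fin M₀) (k : Fin M),
      F i k = Complex.exp (-2 * Real.pi * Complex.I *
        ((s : ℂ) + ((i : ℕ) : ℂ) * ((M / M₀ : ℕ) : ℂ)) * ((k : ℕ) : ℂ) / (M : ℂ)))
    (h : Fin M → ℂ) (hh : ∀ k : Fin M, K ≤ (k : ℕ) → h k = 0) :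
    (1 / M₀ : ℝ) * ∑ i, ‖(F *ᵥ h) i‖ ^ 2 = ∑ k, ‖h k‖ ^ 2 :=
  stmt_5_general M M₀ K hM₀ hdvd s hK F hF h hh
end

section
/- Let M and M₀ be positive integers with M₀ dividing M, set d = M/M₀, fix an integer offset s with 0 ≤ s < d, and let F̄ be the M₀×M partial DFT matrix with entries F̄_{i,k} = exp(−2πi·(s + i·d)·k / M). Let K be an integer with K ≤ M₀ and let G be an M×(N+1) complex matrix whose rows with index ≥ K are all zero. Then Gᴴ F̄ᴴ F̄ G = M₀ · Gᴴ G. -/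
/-!
With `ω = exp (-2πi / M)` and `M = M₀ d`, the entry `F̄ i k` is `ω ^ ((s + i d) k)`. Hence
`(F̄ᴴ F̄) k l = ω ^ (s (l - k)) · ∑_{i < M₀} (ω ^ d) ^ (i (l - k))`, and `ω ^ d` is a primitive
`M₀`-th root of unity, so for `k, l < M₀` this is `M₀` if `k = l` and a vanishing geometric sum
otherwise. Since the rows of `G` vanish from index `K ≤ M₀` on, only this corner of `F̄ᴴ F̄`
enters `Gᴴ F̄ᴴ F̄ G`, where it may be replaced by `M₀ • 1`.
-/

open Matrix

theorem IsPrimitiveRoot.geom_sum_zpow_eq_zero {K : Type*} [Field K] {ζ : K} {n : ℕ}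
    (hζ : IsPrimitiveRoot ζ n) {t : ℤ} (ht : ¬ (n : ℤ) ∣ t) :
    ∑ i ∈ Finset.range n, (ζ ^ t) ^ i = 0 := by
  have hne : ζ ^ t ≠ 1 := fun h => ht ((hζ.zpow_eq_one_iff_dvd t).mp h)
  rw [geom_sum_eq hne, ← zpow_natCast, ← _root_.zpow_mul, mul_comm, _root_.zpow_mul,
    zpow_natCast, hζ.pow_eq_one, _root_.one_zpow, sub_self, zero_div]

theorem IsPrimitiveRoot.star_pow_mul_pow {ω : ℂ} {n : ℕ} (hω : IsPrimitiveRoot ω n) (hn : n ≠ 0)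
    (a b : ℕ) : star (ω ^ a) * ω ^ b = ω ^ ((b : ℤ) - a) := by
  have hω0 : ω ≠ 0 := hω.ne_zero hn
  rw [star_pow, Complex.star_def, ← Complex.inv_eq_conj (hω.norm'_eq_one hn), zpow_sub₀ hω0,
    zpow_natCast, zpow_natCast, inv_pow, inv_mul_eq_div]

theorem IsPrimitiveRoot.sum_star_pow_mul_pow {ω : ℂ} {M₀ d : ℕ}
    (hω : IsPrimitiveRoot ω (M₀ * d)) (hd : d ≠ 0) (s : ℕ) {k l : ℕ} (hk : k < M₀) (hl : l < M₀) :
    ∑ i : Fin M₀, star (ω ^ ((s + i * d) * k)) * ω ^ ((s + i * d) * l) =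
      if k = l then (M₀ : ℂ) else 0 := by
  have hn : M₀ * d ≠ 0 := mul_ne_zero (by omega) hd
  have hω0 : ω ≠ 0 := hω.ne_zero hn
  set t : ℤ := (l : ℤ) - k
  have hterm : ∀ i : ℕ, star (ω ^ ((s + i * d) * k)) * ω ^ ((s + i * d) * l) =
      ω ^ ((s : ℤ) * t) * ((ω ^ d) ^ t) ^ i := by
    intro i
    rw [hω.star_pow_mul_pow hn, ← zpow_natCast ω d, ← _root_.zpow_mul, ← zpow_natCast,
      ← _root_.zpow_mul, ← zpow_add₀ hω0]
    congr 1
    push_cast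
    ring
  simp only [hterm, ← Finset.mul_sum, Fin.sum_univ_eq_sum_range (fun i => ((ω ^ d) ^ t) ^ i)]
  split_ifs with hkl
  · simp [t, hkl]
  · have ht : ¬ (M₀ : ℤ) ∣ t := fun h =>
      hkl (by have := Int.eq_zero_of_abs_lt_dvd h (by rw [abs_lt]; omega); omega)
    rw [(hω.pow (Nat.pos_of_ne_zero hn) (mul_comm M₀ d)).geom_sum_zpow_eq_zero ht, mul_zero]

theorem Matrix.conjTranspose_mul_mul_congr_of_rows_eq_zero {m n α : Type*} [Fintype m]
    [Semiring α] [StarRing α] (S : Set m) {G : Matrix m n α} (hG : ∀ i ∉ S, ∀ j, G i j = 0)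
    {P Q : Matrix m m α} (hPQ : ∀ k ∈ S, ∀ l ∈ S, P k l = Q k l) :
    Gᴴ * P * G = Gᴴ * Q * G := by
  ext a b
  simp only [mul_apply, conjTranspose_apply, Finset.sum_mul]
  refine Finset.sum_congr rfl fun l _ => Finset.sum_congr rfl fun k _ => ?_
  by_cases hl : l ∈ S
  · by_cases hk : k ∈ S
    · rw [hPQ k hk l hl]
    · simp [hG k hk a]
  · simp [hG l hl b]

theorem stmt_7_general (M M₀ N K : ℕ) (hdvd : M₀ ∣ M) (s : ℕ)
    (hK : K ≤ M₀)
    (F : Matrix (Fin M₀) (Fin M) ℂ)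
    (hF : ∀ (i : Fin M₀) (k : Fin M),
      F i k = Complex.exp (-2 * Real.pi * Complex.I *
        ((s : ℂ) + ((i : ℕ) : ℂ) * ((M / M₀ : ℕ) : ℂ)) * ((k : ℕ) : ℂ) / (M : ℂ)))
    (G : Matrix (Fin M) (Fin (N + 1)) ℂ)
    (hG : ∀ i : Fin M, K ≤ (i : ℕ) → ∀ j, G i j = 0) :
    Gᴴ * (Fᴴ * F) * G = (M₀ : ℂ) • (Gᴴ * G) := by
  set d := M / M₀
  have hMd : M₀ * d = M := Nat.mul_div_cancel' hdvd
  have hFF : ∀ k ∈ {k : Fin M | (k : ℕ) < K}, ∀ l ∈ {l : Fin M | (l : ℕ) < K},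
      (Fᴴ * F) k l = ((M₀ : ℂ) • (1 : Matrix (Fin M) (Fin M) ℂ)) k l := by
    intro k hk l hl
    have hM : M ≠ 0 := k.pos.ne'
    set ω := (Complex.exp (2 * Real.pi * Complex.I / M))⁻¹ with hω_def
    have hω : IsPrimitiveRoot ω M := (Complex.isPrimitiveRoot_exp M hM).inv
    have hFpow : ∀ i k, F i k = ω ^ ((s + i * d) * k) := by
      intro i k
      rw [hF, hω_def, ← Complex.exp_neg, ← Complex.exp_nat_mul]
      congr 1
      push_cast
      ring
    rw [← hMd] at hω
    simp only [mul_apply, conjTranspose_apply, hFpow, Matrix.smul_apply, one_apply, Fin.ext_iff]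
    rw [hω.sum_star_pow_mul_pow (right_ne_zero_of_mul (hMd ▸ hM)) s (hk.trans_le hK)
      (hl.trans_le hK)]
    split_ifs <;> simp
  rw [conjTranspose_mul_mul_congr_of_rows_eq_zero _ (fun i hi => hG i (not_lt.mp hi)) hFF,
    Matrix.mul_smul, Matrix.mul_one, Matrix.smul_mul]

/-- Equation (A·8): with `F̄` the partial DFT matrix formed by rows
`s, s+d, …, s+(M₀-1)d` of the `M × M` DFT matrix (`d = M / M₀`) and `G` an
`M × (N+1)` matrix whose rows of index `≥ K` vanish (`K ≤ M₀`), one has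
`Gᴴ F̄ᴴ F̄ G = M₀ · Gᴴ G`. -/
theorem stmt_7 (M M₀ N K : ℕ) (hM₀ : 0 < M₀) (hdvd : M₀ ∣ M) (s : ℕ)
    (hs : s < M / M₀) (hK : K ≤ M₀)
    (F : Matrix (Fin M₀) (Fin M) ℂ)
    (hF : ∀ (i : Fin M₀) (k : Fin M),
      F i k = Complex.exp (-2 * Real.pi * Complex.I *
        ((s : ℂ) + ((i : ℕ) : ℂ) * ((M / M₀ : ℕ) : ℂ)) * ((k : ℕ) : ℂ) / (M : ℂ)))
    (G : Matrix (Fin M) (Fin (N + 1)) ℂ)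
    (hG : ∀ i : Fin M, K ≤ (i : ℕ) → ∀ j, G i j = 0) :
    Gᴴ * (Fᴴ * F) * G = (M₀ : ℂ) • (Gᴴ * G) :=
  stmt_7_general M M₀ N K hdvd s hK F hF G hG
end
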